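/- arXiv:2101.08908 — 2 statements merged into one kernel-verified Lean document; each statement's English description precedes it below -/
import Mathlib

section
/- For every iteration index ν ≥ 1, every Δ ∈ ℕ, and all indices 1 ≤ d₁ < d₂ ≤ N−1, δV_ν(d₁,Δ) > δV_ν(d₂,Δ); that is, for fixed Δ the action-value difference between transmitting and idling is strictly decreasing in the mismatch coordinate d on {1,…,N−1}. -/
/-- Transition weights of the source mismatch chain:
`P d d = 1 - 2p` for `0 ≤ d ≤ N-1`; `P d (d±1) = p` for `1 ≤ d ≤ N-2`;
`P 0 1 = 2p`, `P (N-1) (N-2) = 2p`; all other entries `0`. -/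
noncomputable def Pw (N : ℕ) (p : ℝ) (d d' : ℕ) : ℝ :=
  if d' = d then 1 - 2 * p
  else if d = 0 ∧ d' = 1 then 2 * p
  else if d = N - 1 ∧ d' = N - 2 then 2 * p
  else if 1 ≤ d ∧ d ≤ N - 2 ∧ (d' = d + 1 ∨ d' + 1 = d) then p
  else 0

/-- `S[V](d,Δ) = Σ_{d'=0}^{N-1} P_{d,d'} · V(d', Δ'(d'))` where
`Δ'(d') = 0` if `d' = 0` and `Δ'(d') = Δ + d'` otherwise. -/
noncomputable def Ssum (N : ℕ) (p : ℝ) (V : ℕ × ℕ → ℝ) (d Δ : ℕ) : ℝ :=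
  ∑ d' ∈ Finset.range N, Pw N p d d' * V (d', if d' = 0 then 0 else Δ + d')

/-- `V⁰_{ν+1}(d,Δ) = Δ + S[V_ν](d,Δ)` (value of idling). -/
noncomputable def Vact0 (N : ℕ) (p : ℝ) (V : ℕ × ℕ → ℝ) (d Δ : ℕ) : ℝ :=
  (Δ : ℝ) + Ssum N p V d Δ

/-- `V¹_{ν+1}(d,Δ) = Δ + λ + p_s((1-2p)V_ν(0,0) + 2p V_ν(1,1)) + p_f S[V_ν](d,Δ)`
(value of transmitting), with `p_f = 1 - p_s`. -/
noncomputable def Vact1 (N : ℕ) (p ps lam : ℝ) (V : ℕ × ℕ → ℝ) (d Δ : ℕ) : ℝ :=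
  (Δ : ℝ) + lam + ps * ((1 - 2 * p) * V (0, 0) + 2 * p * V (1, 1))
    + (1 - ps) * Ssum N p V d Δ

/-- Interim value `Q_{ν+1}(d,Δ) = min{V⁰_{ν+1}(d,Δ), V¹_{ν+1}(d,Δ)}`. -/
noncomputable def Qit (N : ℕ) (p ps lam : ℝ) (V : ℕ × ℕ → ℝ) (d Δ : ℕ) : ℝ :=
  min (Vact0 N p V d Δ) (Vact1 N p ps lam V d Δ)

/-- The relative value iteration sequence:
`V_0(d,Δ) = Δ` and `V_{ν+1}(x) = Q_{ν+1}(x) - Q_{ν+1}(0,0)`. -/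
noncomputable def Vit (N : ℕ) (p ps lam : ℝ) : ℕ → ℕ × ℕ → ℝ
  | 0 => fun x => (x.2 : ℝ)
  | ν + 1 => fun x =>
      Qit N p ps lam (Vit N p ps lam ν) x.1 x.2
        - Qit N p ps lam (Vit N p ps lam ν) 0 0

/-- `δV_ν(d,Δ) = V¹_ν(d,Δ) - V⁰_ν(d,Δ)` (for `ν ≥ 1`, built from `V_{ν-1}`). -/
noncomputable def dV (N : ℕ) (p ps lam : ℝ) (ν : ℕ) (d Δ : ℕ) : ℝ :=
  Vact1 N p ps lam (Vit N p ps lam (ν - 1)) d Δ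
    - Vact0 N p (Vit N p ps lam (ν - 1)) d Δ

section Aux

lemma Pw_nonneg {p : ℝ} (hp0 : 0 ≤ p) (hp1 : p ≤ 1/3) (N d k : ℕ) : 0 ≤ Pw N p d k := by
  unfold Pw; split_ifs <;> linarith

lemma Pw_diag (N : ℕ) (p : ℝ) (d : ℕ) : Pw N p d d = 1 - 2*p := by
  unfold Pw; rw [if_pos rfl]

lemma Pw_zero' (N : ℕ) (p : ℝ) {d k : ℕ} (h1 : k ≠ d) (h2 : k ≠ d + 1) (h3 : k + 1 ≠ d) :
    Pw N p d k = 0 := by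
  unfold Pw; split_ifs <;> first | rfl | (exfalso; omega) | simp_all

lemma Pw_01 (m : ℕ) (p : ℝ) : Pw (m+3) p 0 1 = 2*p := by
  unfold Pw; split_ifs <;> first | rfl | (exfalso; omega) | simp_all

lemma Pw_left (m : ℕ) (p : ℝ) {e : ℕ} (he : e ≤ m) : Pw (m+3) p (e+1) e = p := by
  unfold Pw; split_ifs <;> first | rfl | (exfalso; omega) | simp_all

lemma Pw_right (m : ℕ) (p : ℝ) {e : ℕ} (he : e ≤ m) : Pw (m+3) p (e+1) (e+1+1) = p := by
  unfold Pw; split_ifs <;> first | rfl | (exfalso; omega) | simp_all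

lemma Pw_last (m : ℕ) (p : ℝ) : Pw (m+3) p (m+1+1) (m+1) = 2*p := by
  unfold Pw; split_ifs <;> first | rfl | (exfalso; omega) | simp_all

lemma Ssum_zero_eq (m : ℕ) (p : ℝ) (V : ℕ × ℕ → ℝ) (Δ : ℕ) :
    Ssum (m+3) p V 0 Δ = (1 - 2*p) * V (0, 0) + 2*p * V (1, Δ + 1) := by
  unfold Ssum
  have hs : ({0, 1} : Finset ℕ) ⊆ Finset.range (m+3) := by
    intro x hx; simp only [Finset.mem_insert, Finset.mem_singleton] at hx
    simp only [Finset.mem_range]; omega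
  rw [← Finset.sum_subset hs (by
    intro x hx hxs
    simp only [Finset.mem_insert, Finset.mem_singleton] at hxs
    push_neg at hxs
    simp only [Finset.mem_range] at hx
    rw [Pw_zero' _ _ (by omega) (by omega) (by omega), zero_mul])]
  rw [Finset.sum_pair (by omega : (0:ℕ) ≠ 1)]
  rw [Pw_diag, Pw_01]
  norm_num

lemma Ssum_interior_eq (m : ℕ) (p : ℝ) (V : ℕ × ℕ → ℝ) (Δ e : ℕ) (he : e ≤ m) :
    Ssum (m+3) p V (e+1) Δ
      = p * V (e, if e = 0 then 0 else Δ + e)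
        + (1 - 2*p) * V (e+1, Δ + (e+1))
        + p * V (e+1+1, Δ + (e+1+1)) := by
  unfold Ssum
  have hs : ({e, e+1, e+1+1} : Finset ℕ) ⊆ Finset.range (m+3) := by
    intro x hx; simp only [Finset.mem_insert, Finset.mem_singleton] at hx
    simp only [Finset.mem_range]; omega
  rw [← Finset.sum_subset hs (by
    intro x hx hxs
    simp only [Finset.mem_insert, Finset.mem_singleton] at hxs
    push_neg at hxs
    simp only [Finset.mem_range] at hx
    rw [Pw_zero' _ _ (by omega) (by omega) (by omega), zero_mul])]
  rw [show ({e, e+1, e+1+1} : Finset ℕ) = insert e {e+1, e+1+1} from rfl,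
    Finset.sum_insert (by simp only [Finset.mem_insert, Finset.mem_singleton]; omega),
    Finset.sum_pair (by omega : e+1 ≠ e+1+1)]
  rw [Pw_diag, Pw_left m p he, Pw_right m p he]
  rw [if_neg (by omega : ¬ (e+1 = 0)), if_neg (by omega : ¬ (e+1+1 = 0))]
  ring

lemma Ssum_last_eq (m : ℕ) (p : ℝ) (V : ℕ × ℕ → ℝ) (Δ : ℕ) :
    Ssum (m+3) p V (m+1+1) Δ
      = 2*p * V (m+1, Δ + (m+1)) + (1 - 2*p) * V (m+1+1, Δ + (m+1+1)) := by
  unfold Ssum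
  have hs : ({m+1, m+1+1} : Finset ℕ) ⊆ Finset.range (m+3) := by
    intro x hx; simp only [Finset.mem_insert, Finset.mem_singleton] at hx
    simp only [Finset.mem_range]; omega
  rw [← Finset.sum_subset hs (by
    intro x hx hxs
    simp only [Finset.mem_insert, Finset.mem_singleton] at hxs
    push_neg at hxs
    simp only [Finset.mem_range] at hx
    rw [Pw_zero' _ _ (by omega) (by omega) (by omega), zero_mul])]
  rw [Finset.sum_pair (by omega : m+1 ≠ m+1+1)]
  rw [Pw_diag, Pw_last]
  rw [if_neg (by omega : ¬ (m+1 = 0)), if_neg (by omega : ¬ (m+1+1 = 0))]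

end Aux

section Mono

variable {p ps lam : ℝ}

lemma Ssum_mono_base (hp0 : 0 ≤ p) (hp1 : p ≤ 1/3) {V : ℕ × ℕ → ℝ}
    (hV : ∀ d Δ Δ', Δ ≤ Δ' → V (d, Δ) ≤ V (d, Δ'))
    (N d : ℕ) {Δ Δ' : ℕ} (h : Δ ≤ Δ') :
    Ssum N p V d Δ ≤ Ssum N p V d Δ' := by
  unfold Ssum
  refine Finset.sum_le_sum fun k _ => ?_
  refine mul_le_mul_of_nonneg_left ?_ (Pw_nonneg hp0 hp1 _ _ _)
  by_cases hk : k = 0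
  · simp [hk]
  · simp only [if_neg hk]; exact hV _ _ _ (by omega)

lemma Ssum_step_le (m : ℕ) (hp0 : 0 ≤ p) (hp1 : p ≤ 1/3) {V : ℕ × ℕ → ℝ} (Δ : ℕ)
    (hV : ∀ k, k ≤ m + 1 → V (k, if k = 0 then 0 else Δ + k) ≤ V (k+1, Δ + (k+1)))
    {d : ℕ} (hd : d + 1 ≤ m + 2) :
    Ssum (m+3) p V d Δ ≤ Ssum (m+3) p V (d+1) Δ := by
  cases d with
  | zero =>
    rw [Ssum_zero_eq m p V Δ, Ssum_interior_eq m p V Δ 0 (Nat.zero_le m)]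
    have h0 := hV 0 (by omega)
    have h1 := hV 1 (by omega)
    norm_num at h0 h1 ⊢
    nlinarith [mul_nonneg hp0 (sub_nonneg.2 h1),
      mul_nonneg (by linarith : (0:ℝ) ≤ 1 - 3*p) (sub_nonneg.2 h0)]
  | succ e =>
    by_cases hcase : e + 1 ≤ m
    · rw [Ssum_interior_eq m p V Δ e (by omega), Ssum_interior_eq m p V Δ (e+1) (by omega)]
      have h0 := hV e (by omega)
      have h1 := hV (e+1) (by omega)
      have h2 := hV (e+1+1) (by omega)
      rw [if_neg (by omega : ¬ (e+1 = 0))] at h1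
      rw [if_neg (by omega : ¬ (e+1+1 = 0))] at h2
      rw [if_neg (by omega : ¬ (e+1 = 0))]
      nlinarith [mul_nonneg hp0 (sub_nonneg.2 h0),
        mul_nonneg (by linarith : (0:ℝ) ≤ 1 - 3*p) (sub_nonneg.2 h1),
        mul_nonneg hp0 (sub_nonneg.2 h2)]
    · have he : e = m := by omega
      subst he
      rw [Ssum_interior_eq e p V Δ e le_rfl, Ssum_last_eq e p V Δ]
      have h0 := hV e (by omega)
      have h1 := hV (e+1) (by omega)
      rw [if_neg (by omega : ¬ (e+1 = 0))] at h1
      nlinarith [mul_nonneg hp0 (sub_nonneg.2 h0),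
        mul_nonneg (by linarith : (0:ℝ) ≤ 1 - 3*p) (sub_nonneg.2 h1)]

lemma Ssum_step_lt (m : ℕ) (hp0 : 0 ≤ p) (hp1 : p ≤ 1/3) {V : ℕ × ℕ → ℝ} (Δ : ℕ)
    (hV : ∀ k, k ≤ m + 1 → V (k, if k = 0 then 0 else Δ + k) < V (k+1, Δ + (k+1)))
    {d : ℕ} (hd1 : 1 ≤ d) (hd : d + 1 ≤ m + 2) :
    Ssum (m+3) p V d Δ < Ssum (m+3) p V (d+1) Δ := by
  obtain ⟨e, rfl⟩ : ∃ e, d = e + 1 := ⟨d - 1, by omega⟩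
  by_cases hcase : e + 1 ≤ m
  · rw [Ssum_interior_eq m p V Δ e (by omega), Ssum_interior_eq m p V Δ (e+1) (by omega)]
    have h0 := hV e (by omega)
    have h1 := hV (e+1) (by omega)
    have h2 := hV (e+1+1) (by omega)
    rw [if_neg (by omega : ¬ (e+1 = 0))] at h1
    rw [if_neg (by omega : ¬ (e+1+1 = 0))] at h2
    rw [if_neg (by omega : ¬ (e+1 = 0))]
    nlinarith [mul_nonneg hp0 (sub_nonneg.2 h0.le),
      mul_pos (by linarith : (0:ℝ) < 1 - 2*p) (sub_pos.2 h1),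
      mul_nonneg hp0 (sub_nonneg.2 h2.le)]
  · have he : e = m := by omega
    subst he
    rw [Ssum_interior_eq e p V Δ e le_rfl, Ssum_last_eq e p V Δ]
    have h0 := hV e (by omega)
    have h1 := hV (e+1) (by omega)
    rw [if_neg (by omega : ¬ (e+1 = 0))] at h1
    rcases hp0.eq_or_lt with h | h
    · rw [← h]; norm_num; linarith
    · nlinarith [mul_pos h (sub_pos.2 h0),
        mul_nonneg (by linarith : (0:ℝ) ≤ 1 - 3*p) (sub_nonneg.2 h1.le)]

end Mono

section Props

variable {p ps lam : ℝ}

lemma Vit_succ_eq (N : ℕ) (p ps lam : ℝ) (ν a b : ℕ) :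
    Vit N p ps lam (ν+1) (a, b)
      = Qit N p ps lam (Vit N p ps lam ν) a b - Qit N p ps lam (Vit N p ps lam ν) 0 0 := by
  simp [Vit]

lemma Vit_props (m : ℕ) (hp0 : 0 ≤ p) (hp1 : p ≤ 1/3) (hps1 : ps ≤ 1) (ν : ℕ) :
    (∀ d Δ Δ', Δ ≤ Δ' →
        Vit (m+3) p ps lam ν (d, Δ) ≤ Vit (m+3) p ps lam ν (d, Δ'))
    ∧ (∀ Δ k, k ≤ m + 1 →
        Vit (m+3) p ps lam ν (k, if k = 0 then 0 else Δ + k)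
          < Vit (m+3) p ps lam ν (k+1, Δ + (k+1))) := by
  induction ν with
  | zero =>
    constructor
    · intro d Δ Δ' h
      simp only [Vit]
      exact_mod_cast h
    · intro Δ k hk
      simp only [Vit]
      have : (if k = 0 then 0 else Δ + k) < Δ + (k+1) := by split <;> omega
      exact_mod_cast this
  | succ ν ih =>
    obtain ⟨ihM, ihS⟩ := ih
    have hQm : ∀ d Δ Δ', Δ ≤ Δ' →
        Qit (m+3) p ps lam (Vit (m+3) p ps lam ν) d Δ
          ≤ Qit (m+3) p ps lam (Vit (m+3) p ps lam ν) d Δ' := by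
      intro d Δ Δ' h
      have hS := Ssum_mono_base hp0 hp1 ihM (m+3) d h
      have hc : (Δ:ℝ) ≤ Δ' := by exact_mod_cast h
      have h2 := mul_le_mul_of_nonneg_left hS (by linarith : (0:ℝ) ≤ 1 - ps)
      unfold Qit Vact0 Vact1
      exact min_le_min (by linarith) (by linarith)
    constructor
    · intro d Δ Δ' h
      rw [Vit_succ_eq, Vit_succ_eq]
      linarith [hQm d Δ Δ' h]
    · intro Δ k hk
      rw [Vit_succ_eq, Vit_succ_eq]
      have key : Qit (m+3) p ps lam (Vit (m+3) p ps lam ν) k (if k = 0 then 0 else Δ + k)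
          < Qit (m+3) p ps lam (Vit (m+3) p ps lam ν) (k+1) (Δ + (k+1)) := by
        set w : ℕ := if k = 0 then 0 else Δ + k with hw
        have hw2 : w + 1 ≤ Δ + (k+1) := by rw [hw]; split <;> omega
        have hS1 : Ssum (m+3) p (Vit (m+3) p ps lam ν) k w
            ≤ Ssum (m+3) p (Vit (m+3) p ps lam ν) (k+1) w :=
          Ssum_step_le m hp0 hp1 w (fun j hj => (ihS w j hj).le) (by omega)
        have hS2 : Ssum (m+3) p (Vit (m+3) p ps lam ν) (k+1) w
            ≤ Ssum (m+3) p (Vit (m+3) p ps lam ν) (k+1) (Δ + (k+1)) :=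
          Ssum_mono_base hp0 hp1 ihM (m+3) (k+1) (by omega)
        have hc : (w:ℝ) + 1 ≤ ((Δ + (k+1) : ℕ) : ℝ) := by exact_mod_cast hw2
        have hA : Vact0 (m+3) p (Vit (m+3) p ps lam ν) k w
            < Vact0 (m+3) p (Vit (m+3) p ps lam ν) (k+1) (Δ + (k+1)) := by
          unfold Vact0; push_cast at hc ⊢; linarith
        have hB : Vact1 (m+3) p ps lam (Vit (m+3) p ps lam ν) k w
            < Vact1 (m+3) p ps lam (Vit (m+3) p ps lam ν) (k+1) (Δ + (k+1)) := by
          unfold Vact1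
          have := mul_le_mul_of_nonneg_left (hS1.trans hS2) (by linarith : (0:ℝ) ≤ 1 - ps)
          push_cast at hc ⊢; linarith
        exact lt_min ((min_le_left _ _).trans_lt hA) ((min_le_right _ _).trans_lt hB)
      linarith

end Props

/-- for every iteration `ν ≥ 1`, every `Δ`, and all `1 ≤ d₁ < d₂ ≤ N-1`,
`δV_ν(d₁,Δ) > δV_ν(d₂,Δ)`: for fixed `Δ` the action-value difference between
transmitting and idling is strictly decreasing in `d` on `{1,…,N-1}`. -/
theorem dV_strictAnti_in_mismatch
    (N : ℕ) (p ps lam : ℝ)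
    (hN : 2 ≤ N) (hp0 : 0 ≤ p) (hp1 : p ≤ 1 / 3)
    (hps0 : 0 < ps) (hps1 : ps ≤ 1) (hlam : 0 ≤ lam)
    (ν : ℕ) (hν : 1 ≤ ν) (Δ d₁ d₂ : ℕ)
    (hd1 : 1 ≤ d₁) (hlt : d₁ < d₂) (hd2 : d₂ ≤ N - 1) :
    dV N p ps lam ν d₂ Δ < dV N p ps lam ν d₁ Δ := by
  
  obtain ⟨m, rfl⟩ : ∃ m, N = m + 3 := ⟨N - 3, by omega⟩
  obtain ⟨hM, hS⟩ := Vit_props (lam := lam) m hp0 hp1 hps1 (ν - 1)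
  have hstep : ∀ d, 1 ≤ d → d + 1 ≤ m + 2 →
      Ssum (m+3) p (Vit (m+3) p ps lam (ν-1)) d Δ
        < Ssum (m+3) p (Vit (m+3) p ps lam (ν-1)) (d+1) Δ :=
    fun d h1 h2 => Ssum_step_lt m hp0 hp1 Δ (fun k hk => hS Δ k hk) h1 h2
  have hchain : ∀ e d, 1 ≤ d → d < e → e ≤ m + 2 →
      Ssum (m+3) p (Vit (m+3) p ps lam (ν-1)) d Δ
        < Ssum (m+3) p (Vit (m+3) p ps lam (ν-1)) e Δ := by
    intro e
    induction e with
    | zero => omega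
    | succ n ihn =>
      intro d h1 hlt' hle
      rcases Nat.lt_succ_iff_lt_or_eq.mp hlt' with h | h
      · exact (ihn d h1 h (by omega)).trans (hstep n (by omega) (by omega))
      · subst h; exact hstep d h1 (by omega)
  have hS12 := hchain d₂ d₁ hd1 hlt (by omega)
  have hmul := mul_lt_mul_of_pos_left hS12 hps0
  unfold dV Vact0 Vact1
  linarith
end

section
/- (Redundancy of the balance equation at (0,0).) Assume N ≥ 3. Let n = (n_1,…,n_{N−1}) be a threshold policy with τ = max_d n_d ≥ 2 and l_d = d(d+1)/2. Suppose real numbers π_0(0), π_d(Δ) for 1 ≤ d ≤ N−1 and 0 ≤ Δ ≤ τ−1, and Π_d for 1 ≤ d ≤ N−1 satisfy: (i) π_d(Δ) = 0 for 0 ≤ Δ < l_d; (ii) π_d(Δ) = Σ_{d′=1}^{N−1} P_{d′,d}·(1 − p_s·a(d′,Δ−d))·π_{d′}(Δ−d) for max{2, l_d} ≤ Δ ≤ τ−1; (iii) Π_d = Σ_{d′=1}^{N−1} P_{d′,d}·(Σ_{Δ=τ−d}^{τ−1}(1 − p_s·a(d′,Δ))·π_{d′}(Δ) + p_f·Π_{d′});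 (v) π_1(1) = 2p·π_0(0) + 2p_s·p·Σ_{d=1}^{N−1}(Σ_{Δ=n_d}^{τ−1} π_d(Δ) + Π_d); and (vi) Σ_{d=1}^{N−1}(Σ_{Δ=l_d}^{τ−1} π_d(Δ) + Π_d) + π_0(0) = 1. Then the balance equation at (0,0) also holds: π_0(0) = (1−2p)·π_0(0) + p·Σ_{Δ=1}^{τ−1}(1 − p_s·a(1,Δ))·π_1(Δ) + p_f·p·Π_1 + p_s(1−2p)·Σ_{d=1}^{N−1}(Σ_{Δ=n_d}^{τ−1} π_d(Δ) + Π_d). -/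
/-- Real-valued action indicator of the threshold policy `n`:
`a(d,Δ) = 1` if `d ≥ 1` and `Δ ≥ n_d`, else `0`. -/
noncomputable def Aact (n : ℕ → ℕ) (d Δ : ℕ) : ℝ :=
  if 1 ≤ d ∧ n d ≤ Δ then 1 else 0

/-- The age lower bound `l_d = d(d+1)/2`. -/
def lB (d : ℕ) : ℕ := d * (d + 1) / 2

lemma lB_succ (k : ℕ) : lB (k + 1) = lB k + (k + 1) := by
  obtain ⟨t, ht⟩ := (Nat.even_mul_succ_self k).two_dvd
  have h : (k + 1) * (k + 1 + 1) = 2 * t + 2 * (k + 1) := by rw [← ht]; ring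
  simp only [lB, h, ht]
  omega

lemma lB_mono {a b : ℕ} (h : a ≤ b) : lB a ≤ lB b :=
  Nat.div_le_div_right (Nat.mul_le_mul h (by omega))

lemma le_lB (d : ℕ) : d ≤ lB d := by
  cases d with
  | zero => simp [lB]
  | succ k => rw [lB_succ]; omega

lemma lB_pred (d : ℕ) (hd : 1 ≤ d) : lB d = lB (d - 1) + d := by
  obtain ⟨k, rfl⟩ : ∃ k, d = k + 1 := ⟨d - 1, by omega⟩
  simp [lB_succ]

lemma Pw_ne_zero_imp {N : ℕ} {p : ℝ} {d' d : ℕ} (hd' : 1 ≤ d') (h : Pw N p d' d ≠ 0) :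
    d ≤ d' + 1 := by
  unfold Pw at h
  split_ifs at h with h1 h2 h3 h4 <;> first | omega | exact absurd rfl h

lemma rowSum (N : ℕ) (p : ℝ) (hN : 3 ≤ N) (d' : ℕ) (hd'1 : 1 ≤ d') (hd'2 : d' ≤ N - 1) :
    ∑ d ∈ Finset.Icc 1 (N - 1), Pw N p d' d = 1 - (if d' = 1 then p else 0) := by
  have key : ∀ d ∈ Finset.Icc 1 (N - 1), Pw N p d' d =
      (if d = d' then 1 - 2 * p else 0)
      + (if d' ≤ N - 2 then (if d = d' + 1 then p else 0) else 0)
      + (if 2 ≤ d' then (if d = d' - 1 then (if d' = N - 1 then 2 * p else p) else 0) else 0) := by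
    intro d hd
    simp only [Finset.mem_Icc] at hd
    unfold Pw
    split_ifs <;> first | ring1 | omega
  have hsum2 : (∑ d ∈ Finset.Icc 1 (N - 1),
      if d' ≤ N - 2 then (if d = d' + 1 then (p : ℝ) else 0) else 0)
      = if d' ≤ N - 2 then p else 0 := by
    by_cases hA : d' ≤ N - 2
    · simp only [if_pos hA]
      rw [Finset.sum_ite_eq' (Finset.Icc 1 (N - 1)) (d' + 1) (fun _ => (p : ℝ))]
      rw [if_pos (by simp only [Finset.mem_Icc]; omega)]
    · simp only [if_neg hA, Finset.sum_const_zero]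
  have hsum3 : (∑ d ∈ Finset.Icc 1 (N - 1),
      if 2 ≤ d' then (if d = d' - 1 then (if d' = N - 1 then 2 * p else p) else 0) else 0)
      = if 2 ≤ d' then (if d' = N - 1 then 2 * p else p) else 0 := by
    by_cases hB : 2 ≤ d'
    · simp only [if_pos hB]
      rw [Finset.sum_ite_eq' (Finset.Icc 1 (N - 1)) (d' - 1)
        (fun _ => if d' = N - 1 then 2 * p else p)]
      rw [if_pos (by simp only [Finset.mem_Icc]; omega)]
    · simp only [if_neg hB, Finset.sum_const_zero]
  rw [Finset.sum_congr rfl key, Finset.sum_add_distrib, Finset.sum_add_distrib,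
    Finset.sum_ite_eq' (Finset.Icc 1 (N - 1)) d' (fun _ => (1 : ℝ) - 2 * p),
    if_pos (by simp only [Finset.mem_Icc]; omega), hsum2, hsum3]
  split_ifs <;> first | ring1 | omega


/-- redundancy of the balance equation at `(0,0)`: if the numbers
`π_d(Δ)` (for `0 ≤ Δ ≤ τ-1`) and `Π_d` satisfy equations (i), (ii), (iii), (v) and
(vi) of the finite balance system, then the balance equation (iv) at `(0,0)` holds
as well. -/
theorem balance_at_origin_redundant
    (N : ℕ) (p ps : ℝ)
    (hN : 3 ≤ N) (hp0 : 0 ≤ p) (hp1 : p ≤ 1 / 3)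
    (hps0 : 0 < ps) (hps1 : ps ≤ 1)
    (n : ℕ → ℕ) (hn : ∀ d, 1 ≤ d → d ≤ N - 1 → 1 ≤ n d)
    (τ : ℕ) (hτub : ∀ d ∈ Finset.Icc 1 (N - 1), n d ≤ τ)
    (hτmem : ∃ d ∈ Finset.Icc 1 (N - 1), n d = τ) (hτ2 : 2 ≤ τ)
    (π : ℕ → ℕ → ℝ) (Pi : ℕ → ℝ)
    -- (i) virtual states carry no mass
    (h1 : ∀ d ∈ Finset.Icc 1 (N - 1), ∀ Δ : ℕ, Δ < lB d → π d Δ = 0)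
    -- (ii) interior balance equations
    (h2 : ∀ d ∈ Finset.Icc 1 (N - 1), ∀ Δ : ℕ, max 2 (lB d) ≤ Δ → Δ ≤ τ - 1 →
      π d Δ = ∑ d' ∈ Finset.Icc 1 (N - 1),
        Pw N p d' d * (1 - ps * Aact n d' (Δ - d)) * π d' (Δ - d))
    -- (iii) balance equations for the tail masses
    (h3 : ∀ d ∈ Finset.Icc 1 (N - 1),
      Pi d = ∑ d' ∈ Finset.Icc 1 (N - 1),
        Pw N p d' d *
          ((∑ Δ ∈ Finset.Ico (τ - d) τ, (1 - ps * Aact n d' Δ) * π d' Δ)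
            + (1 - ps) * Pi d'))
    -- (v) balance equation at (1,1)
    (h5 : π 1 1 = 2 * p * π 0 0
      + 2 * ps * p * ∑ d ∈ Finset.Icc 1 (N - 1),
          ((∑ Δ ∈ Finset.Ico (n d) τ, π d Δ) + Pi d))
    -- (vi) normalization
    (h6 : (∑ d ∈ Finset.Icc 1 (N - 1),
        ((∑ Δ ∈ Finset.Ico (lB d) τ, π d Δ) + Pi d)) + π 0 0 = 1) :
    -- (iv) balance equation at (0,0)
    π 0 0 = (1 - 2 * p) * π 0 0
      + p * ∑ Δ ∈ Finset.Ico 1 τ, (1 - ps * Aact n 1 Δ) * π 1 Δ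
      + (1 - ps) * p * Pi 1
      + ps * (1 - 2 * p) * ∑ d ∈ Finset.Icc 1 (N - 1),
          ((∑ Δ ∈ Finset.Ico (n d) τ, π d Δ) + Pi d) := by
  set F := Finset.Icc 1 (N - 1) with hF
  have h1F : 1 ∈ F := by simp only [hF, Finset.mem_Icc]; omega
  -- K2 : per-destination combined balance
  have K2 : ∀ d ∈ F, (∑ Δ ∈ Finset.Ico (max 2 (lB d)) τ, π d Δ) + Pi d
      = ∑ d' ∈ F, Pw N p d' d *
          ((∑ Δ ∈ Finset.range τ, (1 - ps * Aact n d' Δ) * π d' Δ) + (1 - ps) * Pi d') := by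
    intro d hd
    have hdm := Finset.mem_Icc.mp hd
    have s1 : (∑ Δ ∈ Finset.Ico (max 2 (lB d)) τ, π d Δ)
        = ∑ Δ ∈ Finset.Ico (max 2 (lB d)) τ, ∑ d' ∈ F,
            Pw N p d' d * (1 - ps * Aact n d' (Δ - d)) * π d' (Δ - d) := by
      refine Finset.sum_congr rfl fun Δ hΔ => ?_
      have hm := Finset.mem_Ico.mp hΔ
      exact h2 d hd Δ hm.1 (by omega)
    have s2 : (∑ Δ ∈ Finset.Ico d τ, ∑ d' ∈ F,
          Pw N p d' d * (1 - ps * Aact n d' (Δ - d)) * π d' (Δ - d))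
        = ∑ Δ ∈ Finset.Ico (max 2 (lB d)) τ, ∑ d' ∈ F,
            Pw N p d' d * (1 - ps * Aact n d' (Δ - d)) * π d' (Δ - d) := by
      symm
      apply Finset.sum_subset
      · exact Finset.Ico_subset_Ico (le_trans (le_lB d) (le_max_right _ _)) le_rfl
      · intro Δ hΔ hΔ'
        simp only [Finset.mem_Ico] at hΔ hΔ'
        have hΔlt : Δ < max 2 (lB d) := by omega
        apply Finset.sum_eq_zero
        intro d' hd'
        have hd'm := Finset.mem_Icc.mp hd'
        by_cases hP : Pw N p d' d = 0
        · rw [hP]; ring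
        · have hdd' : d ≤ d' + 1 := Pw_ne_zero_imp hd'm.1 hP
          have e1 : lB d = lB (d - 1) + d := lB_pred d hdm.1
          have e2 : lB (d - 1) ≤ lB d' := lB_mono (by omega)
          have e3 : 1 ≤ lB d' := le_trans hd'm.1 (le_lB d')
          have hπ : π d' (Δ - d) = 0 := h1 d' hd' _ (by omega)
          rw [hπ]; ring
    have s3 : (∑ Δ ∈ Finset.Ico d τ, ∑ d' ∈ F,
          Pw N p d' d * (1 - ps * Aact n d' (Δ - d)) * π d' (Δ - d))
        = ∑ j ∈ Finset.range (τ - d), ∑ d' ∈ F,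
            Pw N p d' d * (1 - ps * Aact n d' j) * π d' j := by
      rw [Finset.sum_Ico_eq_sum_range]
      refine Finset.sum_congr rfl fun j _ => ?_
      simp only [Nat.add_sub_cancel_left]
    rw [s1, ← s2, s3, h3 d hd, Finset.sum_comm, ← Finset.sum_add_distrib]
    refine Finset.sum_congr rfl fun d' _ => ?_
    have : ∀ j ∈ Finset.range (τ - d),
        Pw N p d' d * (1 - ps * Aact n d' j) * π d' j
          = Pw N p d' d * ((1 - ps * Aact n d' j) * π d' j) := fun j _ => mul_assoc _ _ _
    rw [Finset.sum_congr rfl this, ← Finset.mul_sum,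
      ← Finset.sum_range_add_sum_Ico (fun Δ => (1 - ps * Aact n d' Δ) * π d' Δ)
        (show τ - d ≤ τ by omega)]
    ring
  -- K3 : summed over destinations
  have K3 : (∑ d ∈ F, ((∑ Δ ∈ Finset.Ico (max 2 (lB d)) τ, π d Δ) + Pi d))
      = (∑ d' ∈ F, ((∑ Δ ∈ Finset.range τ, (1 - ps * Aact n d' Δ) * π d' Δ) + (1 - ps) * Pi d'))
        - p * ((∑ Δ ∈ Finset.range τ, (1 - ps * Aact n 1 Δ) * π 1 Δ) + (1 - ps) * Pi 1) := by
    rw [Finset.sum_congr rfl K2, Finset.sum_comm]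
    have e1 : ∀ d' ∈ F, (∑ d ∈ F, Pw N p d' d *
        ((∑ Δ ∈ Finset.range τ, (1 - ps * Aact n d' Δ) * π d' Δ) + (1 - ps) * Pi d'))
        = ((∑ Δ ∈ Finset.range τ, (1 - ps * Aact n d' Δ) * π d' Δ) + (1 - ps) * Pi d')
          - (if d' = 1 then p * ((∑ Δ ∈ Finset.range τ, (1 - ps * Aact n d' Δ) * π d' Δ)
              + (1 - ps) * Pi d') else 0) := by
      intro d' hd'
      have hd'm := Finset.mem_Icc.mp hd'
      rw [← Finset.sum_mul, rowSum N p hN d' hd'm.1 hd'm.2]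
      split_ifs <;> ring
    rw [Finset.sum_congr rfl e1, Finset.sum_sub_distrib,
      Finset.sum_ite_eq' F 1
        (fun d' => p * ((∑ Δ ∈ Finset.range τ, (1 - ps * Aact n d' Δ) * π d' Δ)
          + (1 - ps) * Pi d')), if_pos h1F]
  -- K4 : splitting off the (1,1) state
  have K4 : (∑ d ∈ F, ((∑ Δ ∈ Finset.Ico (lB d) τ, π d Δ) + Pi d))
      = (∑ d ∈ F, ((∑ Δ ∈ Finset.Ico (max 2 (lB d)) τ, π d Δ) + Pi d)) + π 1 1 := by
    have e1 : ∀ d ∈ F, ((∑ Δ ∈ Finset.Ico (lB d) τ, π d Δ) + Pi d)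
        = ((∑ Δ ∈ Finset.Ico (max 2 (lB d)) τ, π d Δ) + Pi d)
          + (if d = 1 then π 1 1 else 0) := by
      intro d hd
      have hdm := Finset.mem_Icc.mp hd
      by_cases hd1 : d = 1
      · subst hd1
        have hl : lB 1 = 1 := rfl
        have hmax : max 2 (lB 1) = 2 := rfl
        rw [hmax, hl, Finset.sum_eq_sum_Ico_succ_bot (show 1 < τ by omega), if_pos rfl]
        ring
      · have h2d : 2 ≤ d := by omega
        have : (2 : ℕ) ≤ lB d := le_trans (by norm_num [lB]) (lB_mono h2d)
        rw [max_eq_right this, if_neg hd1]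
        ring
    rw [Finset.sum_congr rfl e1, Finset.sum_add_distrib,
      Finset.sum_ite_eq' F 1 (fun _ => π 1 1), if_pos h1F]
  -- K1 : tail decomposition of the weighted sums
  have K1 : (∑ d' ∈ F, ((∑ Δ ∈ Finset.range τ, (1 - ps * Aact n d' Δ) * π d' Δ)
        + (1 - ps) * Pi d'))
      = (∑ d ∈ F, ((∑ Δ ∈ Finset.Ico (lB d) τ, π d Δ) + Pi d))
        - ps * (∑ d ∈ F, ((∑ Δ ∈ Finset.Ico (n d) τ, π d Δ) + Pi d)) := by
    have e0 : ∀ d' ∈ F, (∑ Δ ∈ Finset.range τ, (1 - ps * Aact n d' Δ) * π d' Δ)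
        = (∑ Δ ∈ Finset.Ico (lB d') τ, π d' Δ) - ps * ∑ Δ ∈ Finset.Ico (n d') τ, π d' Δ := by
      intro d' hd'
      have hd'm := Finset.mem_Icc.mp hd'
      have e1 : ∀ Δ ∈ Finset.range τ, (1 - ps * Aact n d' Δ) * π d' Δ
          = π d' Δ - ps * (if n d' ≤ Δ then π d' Δ else 0) := by
        intro Δ _
        unfold Aact
        by_cases h : n d' ≤ Δ
        · rw [if_pos ⟨hd'm.1, h⟩, if_pos h]; ring
        · rw [if_neg (by tauto), if_neg h]; ring
      rw [Finset.sum_congr rfl e1, Finset.sum_sub_distrib]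
      congr 1
      · rw [Finset.range_eq_Ico]
        symm
        apply Finset.sum_subset (Finset.Ico_subset_Ico (Nat.zero_le _) le_rfl)
        intro Δ hΔ hΔ'
        simp only [Finset.mem_Ico] at hΔ hΔ'
        exact h1 d' hd' Δ (by omega)
      · rw [← Finset.mul_sum]
        congr 1
        have e2 : (∑ Δ ∈ Finset.Ico (n d') τ, π d' Δ)
            = ∑ Δ ∈ Finset.Ico (n d') τ, (if n d' ≤ Δ then π d' Δ else 0) :=
          Finset.sum_congr rfl fun Δ hΔ => by
            rw [if_pos (Finset.mem_Ico.mp hΔ).1]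
        rw [e2]
        symm
        apply Finset.sum_subset
        · intro Δ hΔ
          simp only [Finset.mem_Ico] at hΔ
          simp only [Finset.mem_range]
          omega
        · intro Δ hΔ hΔ'
          simp only [Finset.mem_range] at hΔ
          simp only [Finset.mem_Ico] at hΔ'
          rw [if_neg (by omega)]
    rw [Finset.sum_congr rfl (fun d' hd' => by rw [e0 d' hd'])]
    rw [Finset.mul_sum, ← Finset.sum_sub_distrib]
    exact Finset.sum_congr rfl fun d _ => by ring
  -- rewrite goal's Ico 1 τ sum into range τ
  have hT1 : (∑ Δ ∈ Finset.Ico 1 τ, (1 - ps * Aact n 1 Δ) * π 1 Δ)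
      = ∑ Δ ∈ Finset.range τ, (1 - ps * Aact n 1 Δ) * π 1 Δ := by
    rw [Finset.range_eq_Ico]
    apply Finset.sum_subset (Finset.Ico_subset_Ico (Nat.zero_le _) le_rfl)
    intro Δ hΔ hΔ'
    simp only [Finset.mem_Ico] at hΔ hΔ'
    have : Δ = 0 := by omega
    subst this
    rw [h1 1 h1F 0 (by norm_num [lB])]
    ring
  rw [hT1]
  linarith [K3, K4, K1, h5]
end
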